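/- Let w be a word of length n ≥ 1 with last letter h = w_n. For any letter a, the word w·a avoids both patterns 1-11 and 1-21 if and only if w avoids both patterns and, in addition, one of the following holds: (i) a > h; (ii) a = h and h occurs only once in w; (iii) a < h and a does not occur among w_1,...,w_{n-1}. -/

import Mathlib

/-- `w` contains the generalized pattern 1-11: ∃ i < j < n with w i = w j = w (j+1). -/
def Contains111 {n m : ℕ} (w : Fin n → Fin m) : Prop :=
  ∃ i j k : Fin n, i < j ∧ (j : ℕ) + 1 = (k : ℕ) ∧ w i = w j ∧ w j = w k

/-- `w` contains the generalized pattern 1-21: ∃ i < j < n with w i = w (j+1) < w j. -/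
def Contains121 {n m : ℕ} (w : Fin n → Fin m) : Prop :=
  ∃ i j k : Fin n, i < j ∧ (j : ℕ) + 1 = (k : ℕ) ∧ w i = w k ∧ w i < w j

private lemma snoc_lt {n m : ℕ} (w : Fin n → Fin m) (a : Fin m) (i : Fin (n+1))
    (hi : (i : ℕ) < n) : (Fin.snoc w a : Fin (n+1) → Fin m) i = w ⟨i, hi⟩ := by
  simp [Fin.snoc, hi]
  rfl

private lemma snoc_mk_lt {n m : ℕ} (w : Fin n → Fin m) (a : Fin m) (t : ℕ)
    (ht : t < n) (ht' : t < n + 1) :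
    (Fin.snoc w a : Fin (n+1) → Fin m) ⟨t, ht'⟩ = w ⟨t, ht⟩ := by
  simp [Fin.snoc, ht]

private lemma snoc_mk_last {n m : ℕ} (w : Fin n → Fin m) (a : Fin m) (p : n < n + 1) :
    (Fin.snoc w a : Fin (n+1) → Fin m) ⟨n, p⟩ = a := by
  simp [Fin.snoc]

private lemma snoc_last' {n m : ℕ} (w : Fin n → Fin m) (a : Fin m) (i : Fin (n+1))
    (hi : (i : ℕ) = n) : (Fin.snoc w a : Fin (n+1) → Fin m) i = a := by
  simp [Fin.snoc, hi]

private lemma avoid_restrict111 {n m : ℕ} (w : Fin n → Fin m) (a : Fin m)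
    (H1 : ¬ Contains111 (Fin.snoc w a)) : ¬ Contains111 w := by
  rintro ⟨i, j, k, hij, hjk, e1, e2⟩
  exact H1 ⟨i.castSucc, j.castSucc, k.castSucc, by simpa using hij, by simpa using hjk,
    by simpa using e1, by simpa using e2⟩

private lemma avoid_restrict121 {n m : ℕ} (w : Fin n → Fin m) (a : Fin m)
    (H2 : ¬ Contains121 (Fin.snoc w a)) : ¬ Contains121 w := by
  rintro ⟨i, j, k, hij, hjk, e1, e2⟩
  exact H2 ⟨i.castSucc, j.castSucc, k.castSucc, by simpa using hij, by simpa using hjk,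
    by simpa using e1, by simpa using e2⟩

private lemma fwd_trichotomy {n m : ℕ} (hn : 1 ≤ n) (w : Fin n → Fin m) (a : Fin m)
    (h : Fin m) (hh : h = w ⟨n - 1, Nat.sub_lt hn Nat.one_pos⟩)
    (H1 : ¬ Contains111 (Fin.snoc w a)) (H2 : ¬ Contains121 (Fin.snoc w a)) :
    (h < a ∨
     (a = h ∧ ∃! i : Fin n, w i = h) ∨
     (a < h ∧ ∀ i : Fin n, (i : ℕ) < n - 1 → w i ≠ a)) := by
  rcases lt_trichotomy h a with hc | hc | hc
  · exact Or.inl hc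
  · refine Or.inr (Or.inl ⟨hc.symm, ⟨n-1, by omega⟩, hh.symm, ?_⟩)
    intro i hi
    by_contra hne
    have hilt : (i : ℕ) < n - 1 := by
      rcases lt_or_eq_of_le (Nat.le_sub_one_of_lt i.isLt) with h' | h'
      · exact h'
      · exact absurd (Fin.ext h') hne
    refine H1 ⟨⟨(i:ℕ), by omega⟩, ⟨n-1, by omega⟩, ⟨n, by omega⟩, ?_, ?_, ?_, ?_⟩
    · exact Fin.mk_lt_mk.mpr hilt
    · show n - 1 + 1 = n; omega
    · rw [snoc_mk_lt w a (i:ℕ) (by omega), snoc_mk_lt w a (n-1) (by omega)]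
      exact hi.trans hh
    · rw [snoc_mk_lt w a (n-1) (by omega), snoc_mk_last]
      exact hh.symm.trans hc
  · refine Or.inr (Or.inr ⟨hc, ?_⟩)
    intro i hi hia
    refine H2 ⟨⟨(i:ℕ), by omega⟩, ⟨n-1, by omega⟩, ⟨n, by omega⟩, ?_, ?_, ?_, ?_⟩
    · exact Fin.mk_lt_mk.mpr hi
    · show n - 1 + 1 = n; omega
    · rw [snoc_mk_lt w a (i:ℕ) (by omega), snoc_mk_last]
      exact hia
    · rw [snoc_mk_lt w a (i:ℕ) (by omega), snoc_mk_lt w a (n-1) (by omega)]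
      rw [hia]; exact hh ▸ hc

private lemma bwd111 {n m : ℕ} (hn : 1 ≤ n) (w : Fin n → Fin m) (a : Fin m)
    (h : Fin m) (hh : h = w ⟨n - 1, Nat.sub_lt hn Nat.one_pos⟩)
    (A1 : ¬ Contains111 w)
    (cond : h < a ∨
      (a = h ∧ ∃! i : Fin n, w i = h) ∨
      (a < h ∧ ∀ i : Fin n, (i : ℕ) < n - 1 → w i ≠ a)) :
    ¬ Contains111 (Fin.snoc w a) := by
  rintro ⟨i, j, k, hij, hjk, e1, e2⟩
  have hk : (k : ℕ) ≤ n := by omega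
  rcases lt_or_eq_of_le hk with hkn | hkn
  · have hjn : (j : ℕ) < n := by omega
    have hin : (i : ℕ) < n := lt_trans hij hjn
    have e1' : w ⟨(i:ℕ), hin⟩ = w ⟨(j:ℕ), hjn⟩ :=
      (snoc_lt w a i hin).symm.trans (e1.trans (snoc_lt w a j hjn))
    have e2' : w ⟨(j:ℕ), hjn⟩ = w ⟨(k:ℕ), hkn⟩ :=
      (snoc_lt w a j hjn).symm.trans (e2.trans (snoc_lt w a k hkn))
    refine A1 ⟨⟨i, hin⟩, ⟨j, hjn⟩, ⟨k, hkn⟩, ?_, hjk, e1', e2'⟩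
    rw [Fin.lt_def]; exact hij
  · have hjn : (j : ℕ) = n - 1 := by omega
    have hin : (i : ℕ) < n - 1 := by
      have := Fin.lt_def.mp hij; omega
    have e1' : w ⟨(i:ℕ), by omega⟩ = h := by
      have t := (snoc_lt w a i (by omega)).symm.trans (e1.trans (snoc_lt w a j (by omega)))
      have hje : (⟨(j:ℕ), by omega⟩ : Fin n) = ⟨n-1, by omega⟩ := Fin.ext hjn
      rw [hje, ← hh] at t; exact t
    have e2' : h = a := by
      have t := (snoc_lt w a j (by omega)).symm.trans (e2.trans (snoc_last' w a k hkn))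
      have hje : (⟨(j:ℕ), by omega⟩ : Fin n) = ⟨n-1, by omega⟩ := Fin.ext hjn
      rw [hje, ← hh] at t; exact t
    rcases cond with hc | ⟨hc, i', hi', hu⟩ | ⟨hc, hfa⟩
    · exact absurd (e2' ▸ hc) (lt_irrefl a)
    · have h1 := hu _ e1'
      have h2 := hu _ hh.symm
      rw [← h2] at h1
      have : (i : ℕ) = n - 1 := congrArg Fin.val h1
      omega
    · exact absurd e2'.symm (ne_of_lt hc)

private lemma bwd121 {n m : ℕ} (hn : 1 ≤ n) (w : Fin n → Fin m) (a : Fin m)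
    (h : Fin m) (hh : h = w ⟨n - 1, Nat.sub_lt hn Nat.one_pos⟩)
    (A2 : ¬ Contains121 w)
    (cond : h < a ∨
      (a = h ∧ ∃! i : Fin n, w i = h) ∨
      (a < h ∧ ∀ i : Fin n, (i : ℕ) < n - 1 → w i ≠ a)) :
    ¬ Contains121 (Fin.snoc w a) := by
  rintro ⟨i, j, k, hij, hjk, e1, e2⟩
  have hk : (k : ℕ) ≤ n := by omega
  rcases lt_or_eq_of_le hk with hkn | hkn
  · have hjn : (j : ℕ) < n := by omega
    have hin : (i : ℕ) < n := lt_trans hij hjn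
    have e1' : w ⟨(i:ℕ), hin⟩ = w ⟨(k:ℕ), hkn⟩ :=
      (snoc_lt w a i hin).symm.trans (e1.trans (snoc_lt w a k hkn))
    have e2' : w ⟨(i:ℕ), hin⟩ < w ⟨(j:ℕ), hjn⟩ :=
      lt_of_lt_of_eq (lt_of_eq_of_lt (snoc_lt w a i hin).symm e2) (snoc_lt w a j hjn)
    refine A2 ⟨⟨i, hin⟩, ⟨j, hjn⟩, ⟨k, hkn⟩, ?_, hjk, e1', e2'⟩
    rw [Fin.lt_def]; exact hij
  · have hjn : (j : ℕ) = n - 1 := by omega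
    have hin : (i : ℕ) < n - 1 := by
      have := Fin.lt_def.mp hij; omega
    have e1' : w ⟨(i:ℕ), by omega⟩ = a :=
      (snoc_lt w a i (by omega)).symm.trans (e1.trans (snoc_last' w a k hkn))
    have e2' : a < h := by
      have t : w ⟨(i:ℕ), by omega⟩ < w ⟨(j:ℕ), by omega⟩ :=
        lt_of_lt_of_eq (lt_of_eq_of_lt (snoc_lt w a i (by omega)).symm e2)
          (snoc_lt w a j (by omega))
      have hje : (⟨(j:ℕ), by omega⟩ : Fin n) = ⟨n-1, by omega⟩ := Fin.ext hjn
      have hwj : w ⟨(j:ℕ), by omega⟩ = h := (congrArg w hje).trans hh.symm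
      exact lt_of_lt_of_eq (lt_of_eq_of_lt e1'.symm t) hwj
    rcases cond with hc | ⟨hc, _⟩ | ⟨hc, hfa⟩
    · exact absurd hc (not_lt.mpr e2'.le)
    · exact absurd (hc ▸ e2') (lt_irrefl a)
    · exact hfa ⟨(i:ℕ), by omega⟩ hin e1'

theorem appending_avoids_111_121 {n m : ℕ} (hn : 1 ≤ n) (w : Fin n → Fin m) (a : Fin m)
    (h : Fin m) (hh : h = w ⟨n - 1, by omega⟩) :
    (¬ Contains111 (Fin.snoc w a) ∧ ¬ Contains121 (Fin.snoc w a)) ↔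
      ((¬ Contains111 w ∧ ¬ Contains121 w) ∧
        (h < a ∨
         (a = h ∧ ∃! i : Fin n, w i = h) ∨
         (a < h ∧ ∀ i : Fin n, (i : ℕ) < n - 1 → w i ≠ a))) := by
  constructor
  · rintro ⟨H1, H2⟩
    exact ⟨⟨avoid_restrict111 w a H1, avoid_restrict121 w a H2⟩,
      fwd_trichotomy hn w a h hh H1 H2⟩
  · rintro ⟨⟨A1, A2⟩, cond⟩
    exact ⟨bwd111 hn w a h hh A1 cond, bwd121 hn w a h hh A2 cond⟩
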